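/- Let H be a complex Hilbert space with H ≠ {0}. The bijection F : S/S¹ → ∂S(H), F([φ]) = |φ⟩⟨φ|, from the quotient of the unit sphere by phase factors to the set of rank-one orthogonal projections, is a homeomorphism when S/S¹ carries the quotient topology and ∂S(H) carries the initial topology generated by the functions P ↦ tr(PQ), Q ∈ ∂S(H). -/

import Mathlib

open scoped InnerProductSpace
open Metric

/-- The rank-one operator `χ ↦ ⟪φ, χ⟫ • φ` (orthogonal projection onto `ℂ φ` when `‖φ‖ = 1`). -/
noncomputable def proj (H : Type) [NormedAddCommGroup H] [InnerProductSpace ℂ H] (φ : H) :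
    H →L[ℂ] H := (innerSL ℂ φ).smulRight φ

/-- Equivalence of unit vectors up to a phase factor. -/
def phaseSetoid (H : Type) [NormedAddCommGroup H] [InnerProductSpace ℂ H] :
    Setoid (sphere (0 : H) 1) where
  r φ ψ := ∃ c : ℂ, ‖c‖ = 1 ∧ (φ : H) = c • (ψ : H)
  iseqv := by
    constructor
    · intro φ; exact ⟨1, by simp⟩
    · rintro φ ψ ⟨c, hc, h⟩
      have hc0 : c ≠ 0 := by intro h0; simp [h0] at hc
      exact ⟨c⁻¹, by simp [hc], by rw [h, smul_smul, inv_mul_cancel₀ hc0, one_smul]⟩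
    · rintro φ ψ ξ ⟨c, hc, h⟩ ⟨d, hd, h'⟩
      exact ⟨c * d, by simp [hc, hd], by rw [h, h', smul_smul]⟩

/-- The set of rank-one orthogonal projections (pure states) on `H`. -/
abbrev PureState (H : Type) [NormedAddCommGroup H] [InnerProductSpace ℂ H] : Type :=
  {P : H →L[ℂ] H // ∃ φ : H, ‖φ‖ = 1 ∧ P = proj H φ}

/-- The transition probability `h_Q(P) = tr(PQ) = ⟪φ, P φ⟫` where `Q = |φ⟩⟨φ|`. -/
noncomputable def transProb (H : Type) [NormedAddCommGroup H] [InnerProductSpace ℂ H]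
    (P Q : PureState H) : ℝ :=
  (⟪Q.2.choose, (P : H →L[ℂ] H) Q.2.choose⟫_ℂ).re

/-- The weak topology `𝒯₀` on the pure states: the coarsest topology making every
transition-probability function `P ↦ h_Q(P) = tr(PQ)` continuous. -/
noncomputable def weakTop (H : Type) [NormedAddCommGroup H] [InnerProductSpace ℂ H] :
    TopologicalSpace (PureState H) :=
  ⨅ Q : PureState H, TopologicalSpace.induced (fun P => transProb H P Q) inferInstance

/-- The pure state `|φ⟩⟨φ|` associated with a unit vector `φ`. -/
noncomputable def pureOf (H : Type) [NormedAddCommGroup H] [InnerProductSpace ℂ H]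
    (φ : sphere (0 : H) 1) : PureState H :=
  ⟨proj H (φ : H), φ, mem_sphere_zero_iff_norm.mp φ.2, rfl⟩

/-- The canonical bijection `F : S/S¹ → ∂S(H)`, `F([φ]) = |φ⟩⟨φ|`. -/
noncomputable def Fmap (H : Type) [NormedAddCommGroup H] [InnerProductSpace ℂ H] :
    Quotient (phaseSetoid H) → PureState H :=
  Quotient.lift (pureOf H) (by
    rintro φ ψ ⟨c, hc, h⟩
    have hcc : (starRingEnd ℂ) c * c = 1 := by
      rw [Complex.conj_mul', ← Complex.ofReal_pow, hc]; norm_num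
    apply Subtype.ext
    show proj H (φ : H) = proj H (ψ : H)
    ext x
    simp only [proj, ContinuousLinearMap.smulRight_apply, innerSL_apply_apply, h,
      inner_smul_left, smul_smul]
    rw [mul_right_comm, hcc, one_mul])

/-! Each transition probability pulls back along `φ ↦ |φ⟩⟨φ|` to `φ ↦ |⟪φ, χ⟫|²` on the sphere,
so `F` is continuous. Conversely, aligning the phase of `ψ` with `φ` gives
`‖c ψ - φ‖² = 2 - 2 |⟪ψ, φ⟫| ≤ 2 (1 - |⟪ψ, φ⟫|²)`, so every pure state `P` with
`tr(P |φ⟩⟨φ|) > 1 - ε² / 2` has a representative in the `ε`-ball around `φ`; hence `F` is open. -/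

section PureStates

variable {H : Type} [NormedAddCommGroup H] [InnerProductSpace ℂ H]

@[simp]
lemma proj_apply (φ x : H) : proj H φ x = ⟪φ, x⟫_ℂ • φ := rfl

lemma re_inner_proj_apply_self (φ x : H) : (⟪x, proj H φ x⟫_ℂ).re = ‖⟪φ, x⟫_ℂ‖ ^ 2 := by
  rw [proj_apply, inner_smul_right, ← inner_conj_symm x φ, Complex.mul_conj,
    Complex.normSq_eq_norm_sq, Complex.ofReal_re]

lemma proj_smul_of_norm_eq_one {c : ℂ} (hc : ‖c‖ = 1) (φ : H) : proj H (c • φ) = proj H φ := by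
  have hcc : (starRingEnd ℂ) c * c = 1 := by
    rw [Complex.conj_mul', hc]; norm_num
  ext x
  simp only [proj_apply, inner_smul_left, smul_smul]
  rw [mul_right_comm, hcc, one_mul]

/-- Independent of the representatives `Classical.choose` picks in `transProb`. -/
lemma transProb_eq_norm_inner_sq {P Q : PureState H} {ψ φ : H}
    (hP : (P : H →L[ℂ] H) = proj H ψ) (hQ : (Q : H →L[ℂ] H) = proj H φ) :
    transProb H P Q = ‖⟪ψ, φ⟫_ℂ‖ ^ 2 := by
  obtain ⟨-, hQχ⟩ := Q.2.choose_spec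
  rw [transProb, hP, re_inner_proj_apply_self, ← norm_inner_symm, ← re_inner_proj_apply_self,
    ← hQχ, hQ, re_inner_proj_apply_self, norm_inner_symm]

lemma exists_phase_eq_of_proj_eq {φ ψ : H} (hφ : ‖φ‖ = 1) (hψ : ‖ψ‖ = 1)
    (h : proj H φ = proj H ψ) : ∃ c : ℂ, ‖c‖ = 1 ∧ φ = c • ψ := by
  have hφψ : φ = ⟪ψ, φ⟫_ℂ • ψ := by
    rw [← proj_apply, ← h, proj_apply, inner_self_eq_norm_sq_to_K, hφ]; norm_num
  refine ⟨⟪ψ, φ⟫_ℂ, ?_, hφψ⟩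
  have := congrArg norm hφψ
  rwa [norm_smul, hψ, mul_one, hφ, eq_comm] at this

lemma exists_norm_smul_sub_sq_eq (ψ φ : H) :
    ∃ c : ℂ, ‖c‖ = 1 ∧ ‖c • ψ - φ‖ ^ 2 = ‖ψ‖ ^ 2 - 2 * ‖⟪ψ, φ⟫_ℂ‖ + ‖φ‖ ^ 2 := by
  obtain ⟨c, hc, hca⟩ := Complex.exists_norm_eq_mul_self ⟪ψ, φ⟫_ℂ
  refine ⟨starRingEnd ℂ c, by rwa [Complex.norm_conj], ?_⟩
  rw [norm_sub_sq (𝕜 := ℂ), inner_smul_left, Complex.conj_conj, ← hca, norm_smul,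
    Complex.norm_conj, hc, one_mul]
  simp

lemma exists_pureOf_eq_dist_sq_le (P : PureState H) (φ : sphere (0 : H) 1) :
    ∃ χ : sphere (0 : H) 1, pureOf H χ = P ∧
      dist χ φ ^ 2 ≤ 2 * (1 - transProb H P (pureOf H φ)) := by
  obtain ⟨ψ, hψ, hP⟩ := P.2
  have hφ : ‖(φ : H)‖ = 1 := mem_sphere_zero_iff_norm.mp φ.2
  obtain ⟨c, hc, hdist⟩ := exists_norm_smul_sub_sq_eq ψ (φ : H)
  have hcψ : ‖c • ψ‖ = 1 := by rw [norm_smul, hc, hψ, one_mul]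
  refine ⟨⟨c • ψ, mem_sphere_zero_iff_norm.mpr hcψ⟩, ?_, ?_⟩
  · exact Subtype.ext ((proj_smul_of_norm_eq_one hc ψ).trans hP.symm)
  · have hinner : ‖⟪ψ, (φ : H)⟫_ℂ‖ ≤ 1 := by
      simpa [hψ, hφ] using norm_inner_le_norm (𝕜 := ℂ) ψ (φ : H)
    rw [Subtype.dist_eq, dist_eq_norm, hdist, transProb_eq_norm_inner_sq hP rfl, hψ, hφ]
    nlinarith [norm_nonneg ⟪ψ, (φ : H)⟫_ℂ]

lemma transProb_self (P : PureState H) : transProb H P P = 1 := by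
  obtain ⟨φ, hφ, hP⟩ := P.2
  rw [transProb_eq_norm_inner_sq hP hP, inner_self_eq_norm_sq_to_K, hφ]
  norm_num

lemma Fmap_bijective : Function.Bijective (Fmap H) := by
  constructor
  · rintro ⟨φ⟩ ⟨ψ⟩ h
    exact Quotient.sound (exists_phase_eq_of_proj_eq (mem_sphere_zero_iff_norm.mp φ.2)
      (mem_sphere_zero_iff_norm.mp ψ.2) (congrArg Subtype.val h))
  · intro P
    obtain ⟨φ, hφ, hP⟩ := P.2
    exact ⟨⟦⟨φ, mem_sphere_zero_iff_norm.mpr hφ⟩⟧, Subtype.ext hP.symm⟩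

/- Overrides the subspace topology that `PureState H`, a subtype of `H →L[ℂ] H`, would otherwise
inherit from the operator norm. -/
noncomputable local instance : TopologicalSpace (PureState H) := weakTop H

lemma continuous_transProb_left (Q : PureState H) : Continuous fun P ↦ transProb H P Q :=
  continuous_iInf_dom continuous_induced_dom

lemma continuous_pureOf : Continuous (pureOf H) := by
  refine continuous_iInf_rng.mpr fun Q ↦ continuous_induced_rng.mpr ?_
  have hQ : (fun φ : sphere (0 : H) 1 ↦ transProb H (pureOf H φ) Q) =
      fun φ : sphere (0 : H) 1 ↦ ‖⟪(φ : H), Q.2.choose⟫_ℂ‖ ^ 2 :=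
    funext fun φ ↦ transProb_eq_norm_inner_sq (P := pureOf H φ) rfl Q.2.choose_spec.2
  rw [Function.comp_def, hQ]
  fun_prop

lemma isOpenMap_pureOf : IsOpenMap (pureOf H) := by
  refine IsOpenMap.of_nhds_le fun φ V hV ↦ ?_
  obtain ⟨ε, hε, hball⟩ := Metric.mem_nhds_iff.mp hV
  have hnhds : {P | 1 - ε ^ 2 / 2 < transProb H P (pureOf H φ)} ∈ nhds (pureOf H φ) :=
    (isOpen_lt continuous_const (continuous_transProb_left _)).mem_nhds
      (by rw [Set.mem_ofPred_eq, transProb_self]; linarith [pow_pos hε 2])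
  filter_upwards [hnhds] with P hP
  obtain ⟨χ, rfl, hχ⟩ := exists_pureOf_eq_dist_sq_le P φ
  apply hball
  rw [mem_ball, ← sq_lt_sq₀ dist_nonneg hε.le]
  linarith [hP]

lemma continuous_Fmap : Continuous (Fmap H) :=
  continuous_pureOf.quotient_lift _

lemma isOpenMap_Fmap : IsOpenMap (Fmap H) :=
  .of_comp continuous_quotient_mk' Quotient.mk_surjective isOpenMap_pureOf

end PureStates

theorem stmt17_general (H : Type) [NormedAddCommGroup H] [InnerProductSpace ℂ H] :
    letI : TopologicalSpace (PureState H) := weakTop H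
    IsHomeomorph (Fmap H) := by
  let _ : TopologicalSpace (PureState H) := weakTop H
  exact ⟨continuous_Fmap, isOpenMap_Fmap, Fmap_bijective⟩

/-- The bijection `F : S/S¹ → ∂S(H)`, `F([φ]) = |φ⟩⟨φ|`, is a homeomorphism
from the quotient topology to the weak topology `𝒯₀` generated by the
transition-probability functions. -/
theorem stmt17 (H : Type) [NormedAddCommGroup H] [InnerProductSpace ℂ H] [CompleteSpace H]
    [Nontrivial H] :
    letI : TopologicalSpace (PureState H) := weakTop H
    IsHomeomorph (Fmap H) :=
  stmt17_general H
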